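/- arXiv:2004.14414 — 2 statements merged into one kernel-verified Lean document; each statement's English description precedes it below -/
import Mathlib

section
/- The action of SL(2,ℝ) × SL(2,ℝ) on M(2,ℝ) given by (A,B)·X = A X B^{-1} preserves the quadratic form q = -det, and the kernel of the induced homomorphism SL(2,ℝ) × SL(2,ℝ) → O(M(2,ℝ), q) is exactly {(I,I), (-I,-I)}. -/
instance : Fact (Even (Fintype.card (Fin 2))) := ⟨by simp⟩

namespace Matrix.SpecialLinearGroup

variable {n : Type*} [Fintype n] [DecidableEq n] {R : Type*} [CommRing R]

theorem det_mul_mul_coe_inv (A B : SpecialLinearGroup n R) (X : Matrix n n R) :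
    ((A : Matrix n n R) * X * ((B⁻¹ : SpecialLinearGroup n R) : Matrix n n R)).det = X.det := by
  rw [det_mul, det_mul, A.det_coe, (B⁻¹).det_coe, one_mul, mul_one]

/-- Testing `X ↦ A X B⁻¹` on `X = 1` forces `A = B`; testing it on `X ∈ SL(n, R)` then puts
`A` in the centre, whose elements are scalar and hence commute with every matrix. -/
theorem forall_mul_mul_coe_inv_eq_iff (A B : SpecialLinearGroup n R) :
    (∀ X : Matrix n n R,
        (A : Matrix n n R) * X * ((B⁻¹ : SpecialLinearGroup n R) : Matrix n n R) = X) ↔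
      A = B ∧ A ∈ Subgroup.center (SpecialLinearGroup n R) := by
  constructor
  · intro h
    have hAB : A = B := by
      have h1 := h 1
      rw [mul_one, ← coe_mul, ← coe_one] at h1
      exact mul_inv_eq_one.mp (Subtype.coe_injective h1)
    subst hAB
    refine ⟨rfl, Subgroup.mem_center_iff.mpr fun C => ?_⟩
    have hC := h C
    rw [← coe_mul, ← coe_mul] at hC
    exact (mul_inv_eq_iff_eq_mul.mp (Subtype.coe_injective hC : A * C * A⁻¹ = C)).symm
  · rintro ⟨rfl, hA⟩ X
    obtain ⟨r, -, hr⟩ := mem_center_iff.mp hA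
    rw [← hr, (scalar_commute r (Commute.all r) X).eq, hr, mul_assoc, ← coe_mul, mul_inv_cancel,
      coe_one, mul_one]

theorem mem_center_iff_eq_one_or_eq_neg_one [NoZeroDivisors R]
    {A : SpecialLinearGroup (Fin 2) R} :
    A ∈ Subgroup.center (SpecialLinearGroup (Fin 2) R) ↔ A = 1 ∨ A = -1 := by
  constructor
  · intro hA
    obtain ⟨r, hr2, hr⟩ := mem_center_iff.mp hA
    rw [Fintype.card_fin, sq, mul_self_eq_one_iff] at hr2
    rcases hr2 with rfl | rfl
    · rw [map_one] at hr
      exact Or.inl (Subtype.ext hr.symm)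
    · rw [map_neg, map_one] at hr
      exact Or.inr (Subtype.ext (by rw [← hr, coe_neg, coe_one]))
  · rintro (rfl | rfl)
    · exact Subgroup.one_mem _
    · exact mem_center_iff.mpr ⟨-1, by norm_num, by rw [map_neg, map_one, coe_neg, coe_one]⟩

end Matrix.SpecialLinearGroup

open Matrix.SpecialLinearGroup in
/-- The action `(A,B)·X = A X B⁻¹` of `SL(2,ℝ) × SL(2,ℝ)` on `M(2,ℝ)` preserves the
quadratic form `q = -det`, and the kernel of the induced homomorphism to
`O(M(2,ℝ), q)` is exactly `{(I,I), (-I,-I)}`. -/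
theorem stmt4 :
    (∀ (A B : Matrix.SpecialLinearGroup (Fin 2) ℝ) (X : Matrix (Fin 2) (Fin 2) ℝ),
        -((A : Matrix (Fin 2) (Fin 2) ℝ) * X *
            ((B⁻¹ : Matrix.SpecialLinearGroup (Fin 2) ℝ) : Matrix (Fin 2) (Fin 2) ℝ)).det
          = -X.det) ∧
    {p : Matrix.SpecialLinearGroup (Fin 2) ℝ × Matrix.SpecialLinearGroup (Fin 2) ℝ |
        ∀ X : Matrix (Fin 2) (Fin 2) ℝ,
          (p.1 : Matrix (Fin 2) (Fin 2) ℝ) * X *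
            ((p.2⁻¹ : Matrix.SpecialLinearGroup (Fin 2) ℝ) : Matrix (Fin 2) (Fin 2) ℝ) = X}
      = {(1, 1), (-1, -1)} := by
  refine ⟨fun A B X => by rw [det_mul_mul_coe_inv], ?_⟩
  ext ⟨A, B⟩
  simp only [Set.mem_ofPred_eq, Set.mem_insert_iff, Set.mem_singleton_iff, Prod.mk.injEq,
    forall_mul_mul_coe_inv_eq_iff, mem_center_iff_eq_one_or_eq_neg_one]
  constructor
  · rintro ⟨rfl, rfl | rfl⟩ <;> simp
  · rintro (⟨rfl, rfl⟩ | ⟨rfl, rfl⟩) <;> simp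
end

section
/- Let φ : ℝP¹ → ℝP¹ be an orientation-preserving homeomorphism, and let φ₀ ∈ PSL(2,ℝ) be the unique element with φ₀⁻¹φ(0) = 1, φ₀⁻¹φ(1) = ∞, φ₀⁻¹φ(∞) = 0. Then φ₀⁻¹∘φ has no fixed point in ℝP¹; equivalently, the graph of φ in ℝP¹ × ℝP¹ is disjoint from the graph of φ₀. -/
/-!
Since `φ` and `φ₀` both preserve the cyclic order and `φ` sends `x₀, x₁, x∞` to where `φ₀`
sends `x₁, x∞, x₀`, a point `x` of the half-open arc `[x₀, x₁)` has `φ x` in the `φ₀`-image of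
the next arc `[x₁, x∞)`, while `φ₀ x` lies in the `φ₀`-image of `[x₀, x₁)`. These images are
disjoint, so `φ x ≠ φ₀ x`; the three half-open arcs cover the circle and are permuted cyclically.
-/

section CircularOrder

variable {α β : Type*} [CircularOrder α] [CircularOrder β]

theorem sbtw_or_sbtw_of_ne {a b c : α} (hab : a ≠ b) (hbc : b ≠ c) (hca : c ≠ a) :
    sbtw a b c ∨ sbtw c b a := by
  by_contra! h
  rw [sbtw_iff_not_btw, sbtw_iff_not_btw, not_not, not_not] at h
  rcases h.2.antisymm h.1 with h | h | h <;> contradiction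

theorem not_sbtw_of_sbtw_of_sbtw {a b c x : α} (habc : sbtw a b c) (hx : sbtw a x b) :
    ¬sbtw b x c := fun hx' =>
  (habc.cyclic_left.trans_right hx.cyclic_right).cyclic_right.not_sbtw hx'.cyclic_right

theorem sbtw_halfOpenArcs_cover {a b c : α} (habc : sbtw a b c) (x : α) :
    (x = a ∨ sbtw a x b) ∨ (x = b ∨ sbtw b x c) ∨ (x = c ∨ sbtw c x a) := by
  by_cases hxa : x = a; · exact .inl (.inl hxa)
  by_cases hxb : x = b; · exact .inr (.inl (.inl hxb))
  by_cases hxc : x = c; · exact .inr (.inr (.inl hxc))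
  have hba : b ≠ a := by rintro rfl; exact sbtw_irrefl_left habc
  have hcb : c ≠ b := by rintro rfl; exact sbtw_irrefl_right habc
  rcases sbtw_or_sbtw_of_ne (Ne.symm hxa) hxb hba with hxab | hxba
  · exact .inl (.inr hxab)
  rcases sbtw_or_sbtw_of_ne (Ne.symm hxb) hxc hcb with hxbc | hxcb
  · exact .inr (.inl (.inr hxbc))
  · have hxca : sbtw a c x := hxba.cyclic_left.cyclic_left.trans_left hxcb.cyclic_right
    exact .inr (.inr (.inr hxca.cyclic_left))

variable {f g : α → β}

theorem apply_ne_of_halfOpenArc (hf : ∀ a b c, sbtw a b c → sbtw (f a) (f b) (f c))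
    (hg : ∀ a b c, sbtw a b c → sbtw (g a) (g b) (g c)) {a b c : α} (habc : sbtw a b c)
    (hab : f a = g b) (hbc : f b = g c) {x : α} (hx : x = a ∨ sbtw a x b) : f x ≠ g x := by
  rcases hx with rfl | hx
  · rw [hab]
    intro hba
    exact sbtw_irrefl_left (hba ▸ hg _ _ _ habc)
  · intro hfx
    have hfx' := hf _ _ _ hx
    rw [hab, hbc, hfx] at hfx'
    exact not_sbtw_of_sbtw_of_sbtw (hg _ _ _ habc) (hg _ _ _ hx) hfx'

theorem apply_ne_of_sbtw_of_rotate (hf : ∀ a b c, sbtw a b c → sbtw (f a) (f b) (f c))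
    (hg : ∀ a b c, sbtw a b c → sbtw (g a) (g b) (g c)) {a b c : α} (habc : sbtw a b c)
    (hab : f a = g b) (hbc : f b = g c) (hca : f c = g a) (x : α) : f x ≠ g x := by
  rcases sbtw_halfOpenArcs_cover habc x with hx | hx | hx
  · exact apply_ne_of_halfOpenArc hf hg habc hab hbc hx
  · exact apply_ne_of_halfOpenArc hf hg habc.cyclic_left hbc hca hx
  · exact apply_ne_of_halfOpenArc hf hg habc.cyclic_right hca hab hx

end CircularOrder

/-- Let `φ` be an orientation-preserving homeomorphism of the circle `ℝP¹` (formalized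
as a bijection of a circularly ordered set preserving the strict betweenness relation),
and let `φ₀` be the orientation-preserving Möbius-type map with `φ₀⁻¹φ(0) = 1`,
`φ₀⁻¹φ(1) = ∞`, `φ₀⁻¹φ(∞) = 0` (for a positively oriented triple `0, 1, ∞`). Then
`φ₀⁻¹ ∘ φ` has no fixed point; equivalently the graph of `φ` is disjoint from the graph
of `φ₀`. -/
theorem stmt16 {α : Type*} [CircularOrder α] (φ φ₀ : α ≃ α)
    (hφ : ∀ a b c : α, sbtw a b c → sbtw (φ a) (φ b) (φ c))
    (hφ₀ : ∀ a b c : α, sbtw a b c → sbtw (φ₀ a) (φ₀ b) (φ₀ c))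
    (x0 x1 xinf : α) (hcyc : sbtw x0 x1 xinf)
    (h0 : φ x0 = φ₀ x1) (h1 : φ x1 = φ₀ xinf) (h2 : φ xinf = φ₀ x0) :
    (∀ x : α, φ₀.symm (φ x) ≠ x) ∧ ∀ x : α, φ x ≠ φ₀ x := by
  have hne := apply_ne_of_sbtw_of_rotate hφ hφ₀ hcyc h0 h1 h2
  exact ⟨fun x hx => hne x (φ₀.symm_apply_eq.mp hx), hne⟩
end
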